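/- For 0 < q < p ≤ 1, n ≥ 1, and x ∈ [0,1], the nodes x_k = p^{n−k}[k]_{p,q}/[n]_{p,q} and weights λ_k(x) = [n choose k]_{p,q} p^{(k(k−1)−n(n−1))/2} x^k ∏_{s=0}^{n−k−1}(p^s − q^s x) satisfy ∑_{k=0}^{n} λ_k(x) x_k = x. -/
import Mathlib


open Finset

noncomputable def pqInt (p q : ℝ) (m : ℕ) : ℝ :=
  ∑ i ∈ Finset.range m, p ^ (m - 1 - i) * q ^ i

noncomputable def pqFact (p q : ℝ) (n : ℕ) : ℝ :=
  ∏ j ∈ Finset.range n, pqInt p q (j + 1)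

noncomputable def pqChoose (p q : ℝ) (n k : ℕ) : ℝ :=
  pqFact p q n / (pqFact p q k * pqFact p q (n - k))

noncomputable def pqBasis (p q : ℝ) (n k : ℕ) (x : ℝ) : ℝ :=
  pqChoose p q n k * (p ^ (k * (k - 1) / 2) / p ^ (n * (n - 1) / 2)) * x ^ k *
    ∏ s ∈ Finset.range (n - k), (p ^ s - q ^ s * x)

noncomputable def pqNode (p q α β : ℝ) (n k : ℕ) : ℝ :=
  (p ^ (n - k) * pqInt p q k + α) / (pqInt p q n + β)

noncomputable def pqStancu (p q α β : ℝ) (n : ℕ) (f : ℝ → ℝ) (x : ℝ) : ℝ :=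
  ∑ k ∈ Finset.range (n + 1), pqBasis p q n k x * f (pqNode p q α β n k)

-- triangle number identity
lemma tri_succ (k : ℕ) : (k+1) * k / 2 = k * (k-1) / 2 + k := by
  cases k with
  | zero => rfl
  | succ j =>
    have h : (j+1+1) * (j+1) = (j+1) * j + (j+1) * 2 := by ring
    rw [h, Nat.add_mul_div_right _ _ (by norm_num : 0 < 2)]
    simp

lemma pqInt_pos {p q : ℝ} (hp : 0 < p) (hq : 0 < q) {m : ℕ} (hm : 0 < m) :
    0 < pqInt p q m := by
  unfold pqInt
  apply Finset.sum_pos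
  · intro i _; positivity
  · exact Finset.nonempty_range_iff.mpr (by omega)

lemma pqFact_pos {p q : ℝ} (hp : 0 < p) (hq : 0 < q) (n : ℕ) : 0 < pqFact p q n := by
  unfold pqFact
  apply Finset.prod_pos
  intro j _; exact pqInt_pos hp hq (by omega)

lemma pqFact_succ (p q : ℝ) (n : ℕ) :
    pqFact p q (n+1) = pqFact p q n * pqInt p q (n+1) := by
  unfold pqFact; rw [Finset.prod_range_succ]

-- [n] = p^(n-k)[k] + q^k [n-k]
lemma pqInt_split (p q : ℝ) {k n : ℕ} (hk : k ≤ n) :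
    pqInt p q n = p ^ (n - k) * pqInt p q k + q ^ k * pqInt p q (n - k) := by
  obtain ⟨m, rfl⟩ := Nat.exists_eq_add_of_le hk
  simp only [Nat.add_sub_cancel_left]
  unfold pqInt
  rw [Finset.sum_range_add, Finset.mul_sum, Finset.mul_sum]
  congr 1
  · apply Finset.sum_congr rfl
    intro i hi
    simp only [Finset.mem_range] at hi
    rw [← mul_assoc, ← pow_add]
    congr 2
    omega
  · apply Finset.sum_congr rfl
    intro i hi
    simp only [Finset.mem_range] at hi
    rw [show k + m - 1 - (k + i) = m - 1 - i by omega, show q ^ (k+i) = q ^ k * q ^ i by rw [pow_add]]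
    ring

-- [n] = q^(n-k)[k] + p^k [n-k]
lemma pqInt_split' (p q : ℝ) {k n : ℕ} (hk : k ≤ n) :
    pqInt p q n = q ^ (n - k) * pqInt p q k + p ^ k * pqInt p q (n - k) := by
  have h := pqInt_split p q (Nat.sub_le n k)
  rw [Nat.sub_sub_self hk] at h
  rw [h]; ring

lemma pqChoose_zero {p q : ℝ} (hp : 0 < p) (hq : 0 < q) (n : ℕ) : pqChoose p q n 0 = 1 := by
  unfold pqChoose
  rw [show pqFact p q 0 = 1 from rfl]
  rw [Nat.sub_zero, one_mul, div_self (pqFact_pos hp hq n).ne']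

lemma pqChoose_self {p q : ℝ} (hp : 0 < p) (hq : 0 < q) (n : ℕ) : pqChoose p q n n = 1 := by
  unfold pqChoose
  rw [Nat.sub_self, show pqFact p q 0 = 1 from rfl, mul_one, div_self (pqFact_pos hp hq n).ne']

lemma pqChoose_pascal {p q : ℝ} (hp : 0 < p) (hq : 0 < q) {n k : ℕ} (hk : k < n) :
    pqChoose p q (n+1) (k+1)
      = q ^ (n-k) * pqChoose p q n k + p ^ (k+1) * pqChoose p q n (k+1) := by
  unfold pqChoose
  rw [show n + 1 - (k+1) = n - k by omega, show n - (k+1) = n - k - 1 by omega]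
  rw [pqFact_succ p q n, pqFact_succ p q k,
    show pqFact p q (n-k) = pqFact p q (n-k-1) * pqInt p q (n-k) by
      rw [show n-k = (n-k-1)+1 by omega, pqFact_succ]; simp]
  have hsplit : pqInt p q (n+1) = q ^ (n-k) * pqInt p q (k+1) + p ^ (k+1) * pqInt p q (n-k) := by
    have := pqInt_split' p q (show k+1 ≤ n+1 by omega)
    rwa [show n + 1 - (k+1) = n - k by omega] at this
  rw [hsplit]
  have h1 := (pqFact_pos hp hq k).ne'
  have h2 := (pqFact_pos hp hq (n-k-1)).ne'
  have h3 := (pqInt_pos hp hq (show 0 < k+1 by omega)).ne'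
  have h4 := (pqInt_pos hp hq (show 0 < n-k by omega)).ne'
  field_simp

noncomputable def pqP (p q x : ℝ) (m : ℕ) : ℝ := ∏ s ∈ Finset.range m, (p ^ s - q ^ s * x)

noncomputable def pqG (p q x : ℝ) (n : ℕ) : ℝ :=
  ∑ k ∈ Finset.range (n+1), pqChoose p q n k * p ^ (k * (k-1) / 2) * x ^ k * pqP p q x (n-k)

lemma pqG_succ {p q : ℝ} (x : ℝ) (hp : 0 < p) (hq : 0 < q) (n : ℕ) :
    pqG p q x (n+1) = p ^ n * pqG p q x n := by
  have step1 : pqG p q x (n+1)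
      = (∑ k ∈ Finset.range (n+1),
          q ^ (n-k) * (pqChoose p q n k * p ^ ((k+1) * k / 2) * x ^ (k+1) * pqP p q x (n-k)))
        + ∑ k ∈ Finset.range (n+1),
          p ^ k * (pqChoose p q n k * p ^ (k * (k-1) / 2) * x ^ k * pqP p q x (n+1-k)) := by
    unfold pqG
    rw [Finset.sum_range_succ' (fun k => pqChoose p q (n+1) k * p ^ (k * (k-1) / 2) * x ^ k * pqP p q x (n+1-k)) (n+1)]
    rw [Finset.sum_range_succ (fun k => pqChoose p q (n+1) (k+1) * p ^ ((k+1) * ((k+1)-1) / 2) * x ^ (k+1) * pqP p q x (n+1-(k+1))) n]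
    rw [Finset.sum_range_succ (fun k =>
          q ^ (n-k) * (pqChoose p q n k * p ^ ((k+1) * k / 2) * x ^ (k+1) * pqP p q x (n-k))) n]
    rw [Finset.sum_range_succ' (fun k =>
          p ^ k * (pqChoose p q n k * p ^ (k * (k-1) / 2) * x ^ k * pqP p q x (n+1-k))) n]
    have hmid : ∀ k ∈ Finset.range n,
        pqChoose p q (n+1) (k+1) * p ^ ((k+1) * ((k+1)-1) / 2) * x ^ (k+1) * pqP p q x (n+1-(k+1))
        = q ^ (n-k) * (pqChoose p q n k * p ^ ((k+1) * k / 2) * x ^ (k+1) * pqP p q x (n-k))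
          + p ^ (k+1) * (pqChoose p q n (k+1) * p ^ ((k+1) * ((k+1)-1) / 2) * x ^ (k+1) * pqP p q x (n+1-(k+1))) := by
      intro k hk
      simp only [Finset.mem_range] at hk
      rw [pqChoose_pascal hp hq hk, show n+1-(k+1) = n-k by omega,
        show (k+1) - 1 = k by omega]
      ring
    rw [Finset.sum_congr rfl hmid, Finset.sum_add_distrib]
    rw [pqChoose_self hp hq (n+1), pqChoose_self hp hq n,
      pqChoose_zero hp hq (n+1), pqChoose_zero hp hq n]
    simp only [Nat.sub_self, pow_zero, one_mul, Nat.add_sub_cancel]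
    ring
  rw [step1]
  rw [← Finset.sum_add_distrib]
  unfold pqG
  rw [Finset.mul_sum]
  apply Finset.sum_congr rfl
  intro k hk
  simp only [Finset.mem_range] at hk
  have hPk : pqP p q x (n+1-k) = pqP p q x (n-k) * (p ^ (n-k) - q ^ (n-k) * x) := by
    unfold pqP
    rw [show n+1-k = (n-k)+1 by omega, Finset.prod_range_succ]
  rw [hPk, tri_succ k, pow_add, show p ^ n = p ^ k * p ^ (n-k) by rw [← pow_add]; congr 1; omega]
  ring

lemma pqG_eq {p q : ℝ} (x : ℝ) (hp : 0 < p) (hq : 0 < q) (n : ℕ) :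
    pqG p q x n = p ^ (n * (n-1) / 2) := by
  induction n with
  | zero =>
    unfold pqG pqP
    simp [pqChoose_zero hp hq 0]
  | succ n ih =>
    rw [pqG_succ x hp hq n, ih, ← pow_add]
    congr 1
    rw [show (n+1) * ((n+1)-1) / 2 = (n+1) * n / 2 by simp, tri_succ n]
    omega

lemma pqBasis_sum {p q : ℝ} (x : ℝ) (hp : 0 < p) (hq : 0 < q) (n : ℕ) :
    ∑ k ∈ Finset.range (n+1), pqBasis p q n k x = 1 := by
  have hrw : ∀ k, pqBasis p q n k x
      = (pqChoose p q n k * p ^ (k * (k-1) / 2) * x ^ k * pqP p q x (n-k))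
        * (p ^ (n * (n-1) / 2))⁻¹ := by
    intro k
    unfold pqBasis pqP
    rw [div_eq_mul_inv]
    ring
  simp only [hrw]
  rw [← Finset.sum_mul]
  rw [show (∑ k ∈ Finset.range (n+1),
      pqChoose p q n k * p ^ (k * (k-1) / 2) * x ^ k * pqP p q x (n-k)) = pqG p q x n from rfl]
  rw [pqG_eq x hp hq n, mul_inv_cancel₀ (pow_ne_zero _ hp.ne')]

lemma pqTerm_eq {p q : ℝ} (x : ℝ) (hp : 0 < p) (hq : 0 < q) {m k : ℕ} (hk : k ≤ m) :
    pqBasis p q (m+1) (k+1) x * (p ^ (m+1-(k+1)) * pqInt p q (k+1) / pqInt p q (m+1))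
      = x * pqBasis p q m k x := by
  have hCh : pqChoose p q (m+1) (k+1) * pqInt p q (k+1)
      = pqChoose p q m k * pqInt p q (m+1) := by
    unfold pqChoose
    rw [show m+1-(k+1) = m-k by omega, pqFact_succ p q m, pqFact_succ p q k]
    have h1 := (pqFact_pos hp hq k).ne'
    have h2 := (pqFact_pos hp hq (m-k)).ne'
    have h3 := (pqInt_pos hp hq (show 0 < k+1 by omega)).ne'
    field_simp
  have e1 : (k+1) * ((k+1)-1) / 2 = k * (k-1) / 2 + k := by simpa using tri_succ k
  have e2 : (m+1) * ((m+1)-1) / 2 = m * (m-1) / 2 + m := by simpa using tri_succ m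
  have hm1 := (pqInt_pos hp hq (show 0 < m+1 by omega)).ne'
  have hpp : (p : ℝ) ≠ 0 := hp.ne'
  have hpm : p ^ m = p ^ k * p ^ (m-k) := by rw [← pow_add]; congr 1; omega
  have key : pqBasis p q (m+1) (k+1) x * (p ^ (m+1-(k+1)) * pqInt p q (k+1) / pqInt p q (m+1))
      = (pqChoose p q (m+1) (k+1) * pqInt p q (k+1)) *
          ((p ^ (k * (k-1) / 2) * p ^ k * p ^ (m-k))
            / (p ^ (m * (m-1) / 2) * p ^ m * pqInt p q (m+1))) * x ^ (k+1) *
          ∏ s ∈ Finset.range (m+1-(k+1)), (p ^ s - q ^ s * x) := by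
    unfold pqBasis
    rw [e1, e2, pow_add, pow_add, show m+1-(k+1) = m-k by omega]
    have hmm := (pqInt_pos hp hq (show 0 < m+1 by omega)).ne'
    field_simp
    ring
  rw [key, hCh, show m+1-(k+1) = m-k by omega]
  unfold pqBasis
  rw [hpm]
  field_simp
  ring

theorem pq_nodes_weights_mean (p q x : ℝ) (hq : 0 < q) (hqp : q < p) (hp : p ≤ 1)
    (hx : x ∈ Set.Icc (0 : ℝ) 1) (n : ℕ) (hn : 1 ≤ n) :
    ∑ k ∈ Finset.range (n + 1),
        pqBasis p q n k x * (p ^ (n - k) * pqInt p q k / pqInt p q n) = x := by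
  have hp0 : 0 < p := lt_trans hq hqp
  obtain ⟨m, rfl⟩ : ∃ m, n = m + 1 := ⟨n - 1, by omega⟩
  rw [Finset.sum_range_succ' (fun k => pqBasis p q (m+1) k x *
      (p ^ (m+1-k) * pqInt p q k / pqInt p q (m+1))) (m+1)]
  have h0 : pqInt p q 0 = 0 := by unfold pqInt; simp
  rw [h0]
  simp only [mul_zero, zero_div, mul_zero, add_zero]
  have hterms : ∀ k ∈ Finset.range (m+1),
      pqBasis p q (m+1) (k+1) x * (p ^ (m+1-(k+1)) * pqInt p q (k+1) / pqInt p q (m+1))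
        = x * pqBasis p q m k x := by
    intro k hk
    simp only [Finset.mem_range] at hk
    exact pqTerm_eq x hp0 hq (by omega)
  rw [Finset.sum_congr rfl hterms, ← Finset.mul_sum, pqBasis_sum x hp0 hq m, mul_one]
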